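/- arXiv:1301.2130 — 2 statements merged into one kernel-verified Lean document; each statement's English description precedes it below -/
import Mathlib

section
/- Assume the stepsizes are uniform, τ_v = τ for all v ∈ V, with τ < ‖A_v‖₂⁻² for every v ∈ V. Then the surrogate functional majorizes the distributed Lasso functional: for all X, C, B ∈ ℝ^{n×|V|}, F^S(X, C, B) ≥ F(X). -/
open Finset Filter Matrix

/-- Euclidean norm on `ℝ^k`. -/
noncomputable def enorm2 {k : ℕ} (x : Fin k → ℝ) : ℝ := Real.sqrt (∑ i, (x i) ^ 2)

/-- ℓ¹ norm on `ℝ^k`. -/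
noncomputable def onenorm {k : ℕ} (x : Fin k → ℝ) : ℝ := ∑ i, |x i|

/-- Operator norm of a matrix induced by Euclidean norms. -/
noncomputable def opNorm {m n : ℕ} (A : Matrix (Fin m) (Fin n) ℝ) : ℝ :=
  sSup {c : ℝ | ∃ z : Fin n → ℝ, z ≠ 0 ∧ c = enorm2 (A.mulVec z) / enorm2 z}

/-- Soft thresholding operator `η_α`, acting componentwise. -/
noncomputable def eta {k : ℕ} (α : ℝ) (x : Fin k → ℝ) : Fin k → ℝ :=
  fun i => if α < |x i| then Real.sign (x i) * (|x i| - α) else 0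

/-- The uniform-weights stochastic matrix adapted to the graph `E`
(`d` is the common degree). -/
noncomputable def Pmat {V : Type*} (E : V → V → Prop) [DecidableRel E] (d : ℕ) :
    V → V → ℝ := fun u w => if E u w then 1 / (d : ℝ) else 0

/-- Column `v` of `X Pᵀ`, i.e. the `P`-weighted average `∑ w P_{v,w} x_w`. -/
noncomputable def avg {n : ℕ} {V : Type*} [Fintype V] (P : V → V → ℝ)
    (X : V → Fin n → ℝ) : V → Fin n → ℝ := fun v i => ∑ w, P v w * X w i

/-- Frobenius norm of `X ∈ ℝ^{n×|V|}` (columns indexed by `V`). -/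
noncomputable def frobNorm {n : ℕ} {V : Type*} [Fintype V] (X : V → Fin n → ℝ) : ℝ :=
  Real.sqrt (∑ v, ∑ i, (X v i) ^ 2)

/-- The distributed Lasso functional `F`. -/
noncomputable def Flasso {n m : ℕ} {V : Type*} [Fintype V] (P : V → V → ℝ)
    (A : V → Matrix (Fin m) (Fin n) ℝ) (y : V → Fin m → ℝ)
    (q α : ℝ) (τ : V → ℝ) (X : V → Fin n → ℝ) : ℝ :=
  ∑ v, (q * enorm2 (y v - (A v).mulVec (X v)) ^ 2 + (2 * α / τ v) * onenorm (X v)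
    + ((1 - q) / τ v) * ∑ w, P v w * enorm2 (avg P X w - X v) ^ 2)

/-- The DISTA operator `Γ`, defined columnwise. -/
noncomputable def Gamma {n m : ℕ} {V : Type*} [Fintype V] (P : V → V → ℝ)
    (A : V → Matrix (Fin m) (Fin n) ℝ) (y : V → Fin m → ℝ)
    (q α : ℝ) (τ : V → ℝ) (X : V → Fin n → ℝ) : V → Fin n → ℝ :=
  fun v => eta α (fun i =>
    (1 - q) * avg P (avg P X) v i
      + q * (X v i + τ v * ((A v)ᵀ.mulVec (y v - (A v).mulVec (X v)) i)))

/-- The surrogate functional `F^S`. -/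
noncomputable def FS {n m : ℕ} {V : Type*} [Fintype V] (E : V → V → Prop) [DecidableRel E]
    (d : ℕ) (A : V → Matrix (Fin m) (Fin n) ℝ) (y : V → Fin m → ℝ)
    (q α : ℝ) (τ : V → ℝ) (X C B : V → Fin n → ℝ) : ℝ :=
  ∑ v, (q * enorm2 ((A v).mulVec (X v) - y v) ^ 2 + (2 * α / τ v) * onenorm (X v)
    + ((1 - q) / ((d : ℝ) * τ v)) *
        ∑ w ∈ Finset.univ.filter (fun w => E v w), enorm2 (X v - C w) ^ 2
    + (q / τ v) * enorm2 (X v - B v) ^ 2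
    - q * enorm2 ((A v).mulVec (X v - B v)) ^ 2)

/-! The surrogate differs from `F` in two places. The term
`(q/τ)‖x_v - b_v‖² - q‖A_v (x_v - b_v)‖²` is nonnegative because `τ ‖A_v‖₂² < 1`. After exchanging
the sums and using the symmetry of `P`, both consensus terms read `Σ_w Σ_v P_{w,v} ‖x_v - z_w‖²`,
with `z_w = x̄_w` in `F` and `z_w = c_w` in `F^S`; since every row of `P` is a probability vector,
the weighted mean `x̄_w` minimises `z ↦ Σ_v P_{w,v} ‖x_v - z‖²`. -/

open scoped Matrix.Norms.L2Operator

lemma enorm2_eq_norm_toLp {k : ℕ} (x : Fin k → ℝ) :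
    enorm2 x = ‖(WithLp.toLp 2 x : EuclideanSpace ℝ (Fin k))‖ := by
  simp [enorm2, EuclideanSpace.norm_eq]

lemma sq_enorm2 {k : ℕ} (x : Fin k → ℝ) : enorm2 x ^ 2 = ∑ i, x i ^ 2 :=
  Real.sq_sqrt (Finset.sum_nonneg fun _ _ => sq_nonneg _)

lemma enorm2_sub_comm {k : ℕ} (x y : Fin k → ℝ) : enorm2 (x - y) = enorm2 (y - x) := by
  rw [enorm2_eq_norm_toLp, enorm2_eq_norm_toLp, WithLp.toLp_sub, WithLp.toLp_sub, norm_sub_rev]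

lemma enorm2_mulVec_le_l2_opNorm_mul {m n : ℕ} (A : Matrix (Fin m) (Fin n) ℝ) (z : Fin n → ℝ) :
    enorm2 (A *ᵥ z) ≤ ‖A‖ * enorm2 z := by
  rw [enorm2_eq_norm_toLp, enorm2_eq_norm_toLp]
  exact A.l2_opNorm_mulVec (WithLp.toLp 2 z)

lemma enorm2_mulVec_le_opNorm_mul {m n : ℕ} (A : Matrix (Fin m) (Fin n) ℝ) (z : Fin n → ℝ) :
    enorm2 (A *ᵥ z) ≤ opNorm A * enorm2 z := by
  rcases eq_or_ne z 0 with rfl | hz0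
  · simp [enorm2]
  have hz : 0 < enorm2 z := by
    rw [enorm2_eq_norm_toLp]
    exact norm_pos_iff.mpr ((WithLp.toLp_eq_zero 2).not.mpr hz0)
  have hbdd : BddAbove {c : ℝ | ∃ w : Fin n → ℝ, w ≠ 0 ∧ c = enorm2 (A *ᵥ w) / enorm2 w} := by
    refine ⟨‖A‖, ?_⟩
    rintro c ⟨w, -, rfl⟩
    exact div_le_of_le_mul₀ (Real.sqrt_nonneg _) (norm_nonneg A)
      (enorm2_mulVec_le_l2_opNorm_mul A w)
  rw [← div_le_iff₀ hz]
  exact le_csSup hbdd ⟨z, hz0, rfl⟩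

lemma sq_enorm2_mulVec_le_div {m n : ℕ} {A : Matrix (Fin m) (Fin n) ℝ} {τ : ℝ} (hτ0 : 0 < τ)
    (hτ : τ < (opNorm A ^ 2)⁻¹) (z : Fin n → ℝ) :
    enorm2 (A *ᵥ z) ^ 2 ≤ enorm2 z ^ 2 / τ := by
  have hA : opNorm A ^ 2 ≤ τ⁻¹ := by
    rcases (sq_nonneg (opNorm A)).eq_or_lt with h | h
    · rw [← h]
      positivity
    · exact ((lt_inv_comm₀ hτ0 h).mp hτ).le
  calc enorm2 (A *ᵥ z) ^ 2 ≤ (opNorm A * enorm2 z) ^ 2 :=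
        pow_le_pow_left₀ (Real.sqrt_nonneg _) (enorm2_mulVec_le_opNorm_mul A z) 2
    _ = opNorm A ^ 2 * enorm2 z ^ 2 := mul_pow _ _ 2
    _ ≤ τ⁻¹ * enorm2 z ^ 2 := by gcongr
    _ = enorm2 z ^ 2 / τ := inv_mul_eq_div τ _

lemma sum_mul_sq_sub_weightedMean_le {ι : Type*} [Fintype ι] {p : ι → ℝ} (hp : ∑ i, p i = 1)
    (a : ι → ℝ) (c : ℝ) :
    ∑ i, p i * (a i - ∑ j, p j * a j) ^ 2 ≤ ∑ i, p i * (a i - c) ^ 2 := by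
  set μ := ∑ j, p j * a j
  have expand : ∀ t, ∑ i, p i * (a i - t) ^ 2 = ∑ i, p i * a i ^ 2 - 2 * t * μ + t ^ 2 := by
    intro t
    have h : ∀ i, p i * (a i - t) ^ 2 = p i * a i ^ 2 - 2 * t * (p i * a i) + t ^ 2 * p i :=
      fun i => by ring
    rw [Finset.sum_congr rfl fun i _ => h i, Finset.sum_add_distrib, Finset.sum_sub_distrib,
      ← Finset.mul_sum, ← Finset.mul_sum, hp]
    ring
  rw [expand, expand]
  nlinarith [sq_nonneg (μ - c)]

section Averaging

variable {n : ℕ} {V : Type*} [Fintype V] {P : V → V → ℝ}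

lemma sum_mul_sq_enorm2_sub_avg_le {w : V} (hw : ∑ u, P w u = 1) (X : V → Fin n → ℝ)
    (c : Fin n → ℝ) :
    ∑ v, P w v * enorm2 (X v - avg P X w) ^ 2 ≤ ∑ v, P w v * enorm2 (X v - c) ^ 2 := by
  simp only [sq_enorm2, Pi.sub_apply, Finset.mul_sum]
  calc ∑ v, ∑ i, P w v * (X v i - avg P X w i) ^ 2
      = ∑ i, ∑ v, P w v * (X v i - avg P X w i) ^ 2 := Finset.sum_comm
    _ ≤ ∑ i, ∑ v, P w v * (X v i - c i) ^ 2 := Finset.sum_le_sum fun i _ =>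
        sum_mul_sq_sub_weightedMean_le hw (fun v => X v i) (c i)
    _ = ∑ v, ∑ i, P w v * (X v i - c i) ^ 2 := Finset.sum_comm

lemma sum_sum_mul_sq_enorm2_avg_sub_le (hsymm : ∀ u w, P u w = P w u)
    (hrow : ∀ w, ∑ u, P w u = 1) (X C : V → Fin n → ℝ) :
    ∑ v, ∑ w, P v w * enorm2 (avg P X w - X v) ^ 2 ≤ ∑ v, ∑ w, P v w * enorm2 (X v - C w) ^ 2 :=
  calc ∑ v, ∑ w, P v w * enorm2 (avg P X w - X v) ^ 2
      = ∑ w, ∑ v, P w v * enorm2 (X v - avg P X w) ^ 2 := by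
        rw [Finset.sum_comm]
        exact Finset.sum_congr rfl fun w _ => Finset.sum_congr rfl fun v _ => by
          rw [hsymm, enorm2_sub_comm]
    _ ≤ ∑ w, ∑ v, P w v * enorm2 (X v - C w) ^ 2 :=
        Finset.sum_le_sum fun w _ => sum_mul_sq_enorm2_sub_avg_le (hrow w) X (C w)
    _ = ∑ v, ∑ w, P v w * enorm2 (X v - C w) ^ 2 := by
        rw [Finset.sum_comm]
        exact Finset.sum_congr rfl fun v _ => Finset.sum_congr rfl fun w _ => by rw [hsymm]

end Averaging

section UniformWeights

variable {V : Type*} {E : V → V → Prop} [DecidableRel E] {d : ℕ}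

lemma Pmat_symm (hsymm : ∀ u v, E u v → E v u) (u w : V) : Pmat E d u w = Pmat E d w u := by
  simp only [Pmat, show E u w ↔ E w u from ⟨hsymm u w, hsymm w u⟩]

variable [Fintype V]

lemma sum_Pmat_mul (v : V) (f : V → ℝ) :
    ∑ w, Pmat E d v w * f w = 1 / (d : ℝ) * ∑ w ∈ Finset.univ.filter (fun w => E v w), f w := by
  rw [Finset.mul_sum, Finset.sum_filter]
  exact Finset.sum_congr rfl fun w _ => by by_cases h : E v w <;> simp [Pmat, h]

lemma sum_Pmat_row (hself : ∀ v, E v v)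
    (hreg : ∀ v, (Finset.univ.filter (fun w => E v w)).card = d) (v : V) :
    ∑ w, Pmat E d v w = 1 := by
  have hd : (d : ℝ) ≠ 0 := by
    rw [← hreg v]
    exact Nat.cast_ne_zero.mpr (Finset.card_ne_zero_of_mem (by simpa using hself v))
  simpa [hreg v, hd] using sum_Pmat_mul (E := E) (d := d) v (fun _ => 1)

lemma FS_eq_sum_Pmat {n m : ℕ} (A : V → Matrix (Fin m) (Fin n) ℝ) (y : V → Fin m → ℝ)
    (q α : ℝ) (τ : V → ℝ) (X C B : V → Fin n → ℝ) :
    FS E d A y q α τ X C B =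
      ∑ v, (q * enorm2 (y v - A v *ᵥ X v) ^ 2 + (2 * α / τ v) * onenorm (X v)
        + ((1 - q) / τ v) * ∑ w, Pmat E d v w * enorm2 (X v - C w) ^ 2
        + ((q / τ v) * enorm2 (X v - B v) ^ 2 - q * enorm2 (A v *ᵥ (X v - B v)) ^ 2)) := by
  refine Finset.sum_congr rfl fun v _ => ?_
  rw [sum_Pmat_mul, enorm2_sub_comm (y v)]
  ring

end UniformWeights

theorem surrogate_majorizes_lasso_general
    {n m d : ℕ} {V : Type*} [Fintype V]
    (E : V → V → Prop) [DecidableRel E]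
    (hself : ∀ v, E v v) (hsymm : ∀ u v, E u v → E v u)
    (hreg : ∀ v, (Finset.univ.filter (fun w => E v w)).card = d)
    (A : V → Matrix (Fin m) (Fin n) ℝ) (y : V → Fin m → ℝ)
    (q α : ℝ) (hq0 : 0 < q) (hq1 : q < 1)
    (τ : ℝ) (hτpos : 0 < τ)
    (hτ : ∀ v, τ < (opNorm (A v) ^ 2)⁻¹) :
    ∀ X C B : V → Fin n → ℝ,
      Flasso (Pmat E d) A y q α (fun _ => τ) X ≤ FS E d A y q α (fun _ => τ) X C B := by
  intro X C B
  have consensus := sum_sum_mul_sq_enorm2_avg_sub_le (Pmat_symm hsymm) (sum_Pmat_row hself hreg) X C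
  have gap (v : V) :
      0 ≤ (q / τ) * enorm2 (X v - B v) ^ 2 - q * enorm2 (A v *ᵥ (X v - B v)) ^ 2 := by
    rw [sub_nonneg, div_mul_eq_mul_div, mul_div_assoc]
    exact mul_le_mul_of_nonneg_left (sq_enorm2_mulVec_le_div hτpos (hτ v) _) hq0.le
  have hk : 0 ≤ (1 - q) / τ := div_nonneg (sub_nonneg.mpr hq1.le) hτpos.le
  rw [FS_eq_sum_Pmat]
  simp only [Flasso, Finset.sum_add_distrib, ← Finset.mul_sum]
  linarith [mul_le_mul_of_nonneg_left consensus hk, Finset.sum_nonneg fun v (_ : v ∈ Finset.univ) => gap v]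

/-- Majorization. With uniform stepsizes `τ < ‖A_v‖₂⁻²` for every `v`, the
surrogate functional majorizes the distributed Lasso functional: `F^S(X,C,B) ≥ F(X)` for all
`X`, `C`, `B`. -/
theorem surrogate_majorizes_lasso
    {n m d : ℕ} {V : Type*} [Fintype V] [DecidableEq V] [Nonempty V]
    (E : V → V → Prop) [DecidableRel E]
    (hself : ∀ v, E v v) (hsymm : ∀ u v, E u v → E v u)
    (hreg : ∀ v, (Finset.univ.filter (fun w => E v w)).card = d)
    (A : V → Matrix (Fin m) (Fin n) ℝ) (y : V → Fin m → ℝ)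
    (q α : ℝ) (hq0 : 0 < q) (hq1 : q < 1) (hα : 0 < α)
    (τ : ℝ) (hτpos : 0 < τ)
    (hτ : ∀ v, τ < (opNorm (A v) ^ 2)⁻¹) :
    ∀ X C B : V → Fin n → ℝ,
      Flasso (Pmat E d) A y q α (fun _ => τ) X ≤ FS E d A y q α (fun _ => τ) X C B :=
  surrogate_majorizes_lasso_general E hself hsymm hreg A y q α hq0 hq1 τ hτpos hτ
end

section
/- Assume the stepsizes are uniform, τ_v = τ for all v ∈ V, with τ < ‖A_v‖₂⁻² for every v ∈ V. Then for any initial condition X(0) ∈ ℝ^{n×|V|}, the sequence {X(t)}_{t∈ℕ} generated by X(t+1) = ΓX(t) is bounded and satisfies lim_{t→∞} ‖X(t+1) − X(t)‖_F² = 0 (i.e., Γ is asymptotically regular). -/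
open Finset Filter Matrix

/-!
DISTA is a majorization–minimization scheme for the distributed Lasso functional `F`.
For fixed `X` the surrogate `Z ↦ F^S(Z; XPᵀ, X)` lies above `F` (because `τ‖A_v‖₂² ≤ 1` and,
`P` being symmetric and stochastic, the `P`-weighted average minimizes the `P`-weighted sum of
squared distances) and touches it at `Z = X`. Column by column, `τ F^S` equals
`‖z - u‖² + 2α‖z‖₁` plus a constant, whose unique minimizer is `η_α u = (ΓX)_v` and which grows
at least by `‖z - η_α u‖²` away from it. Hence `F(ΓX) + τ⁻¹‖ΓX - X‖_F² ≤ F(X)`: the values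
`F(X(t))` decrease, `F ≥ (2α/τ)‖·‖_F` bounds the orbit, and telescoping gives
`‖X(t+1) - X(t)‖_F² → 0`.
-/

lemma enorm2_sq {k : ℕ} (x : Fin k → ℝ) : enorm2 x ^ 2 = x ⬝ᵥ x := by
  rw [enorm2, Real.sq_sqrt (Finset.sum_nonneg fun _ _ => sq_nonneg _)]
  simp only [dotProduct, sq]

lemma frobNorm_sq {n : ℕ} {V : Type*} [Fintype V] (X : V → Fin n → ℝ) :
    frobNorm X ^ 2 = ∑ v, X v ⬝ᵥ X v := by
  rw [frobNorm,
    Real.sq_sqrt (Finset.sum_nonneg fun _ _ => Finset.sum_nonneg fun _ _ => sq_nonneg _)]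
  simp only [dotProduct, sq]

lemma enorm2_eq_norm {k : ℕ} (x : Fin k → ℝ) :
    enorm2 x = ‖(EuclideanSpace.equiv (Fin k) ℝ).symm x‖ := by
  simp [enorm2, EuclideanSpace.norm_eq]

lemma dotProduct_self_nonneg {k : ℕ} (x : Fin k → ℝ) : 0 ≤ x ⬝ᵥ x :=
  Finset.sum_nonneg fun _ _ => mul_self_nonneg _

lemma sub_dotProduct_sub_self {k : ℕ} (x y : Fin k → ℝ) :
    (x - y) ⬝ᵥ (x - y) = x ⬝ᵥ x - 2 * x ⬝ᵥ y + y ⬝ᵥ y := by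
  simp only [sub_dotProduct, dotProduct_sub, dotProduct_comm y x]
  ring

lemma sub_dotProduct_sub_self_comm {k : ℕ} (x y : Fin k → ℝ) :
    (x - y) ⬝ᵥ (x - y) = (y - x) ⬝ᵥ (y - x) := by
  rw [← neg_sub, neg_dotProduct, dotProduct_neg, neg_neg]

open scoped Matrix.Norms.L2Operator in
lemma mulVec_dotProduct_self_le {m n : ℕ} (A : Matrix (Fin m) (Fin n) ℝ) (z : Fin n → ℝ) :
    A *ᵥ z ⬝ᵥ A *ᵥ z ≤ opNorm A ^ 2 * (z ⬝ᵥ z) := by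
  rcases eq_or_ne z 0 with rfl | hz
  · simp
  have hpos : ∀ w : Fin n → ℝ, w ≠ 0 → 0 < enorm2 w := fun w hw => by
    rw [enorm2_eq_norm, norm_pos_iff]
    simpa using hw
  have hbdd : BddAbove {c : ℝ | ∃ z : Fin n → ℝ, z ≠ 0 ∧ c = enorm2 (A *ᵥ z) / enorm2 z} := by
    refine ⟨‖A‖, ?_⟩
    rintro c ⟨w, hw, rfl⟩
    rw [div_le_iff₀ (hpos w hw), enorm2_eq_norm, enorm2_eq_norm]
    exact A.l2_opNorm_mulVec _
  have hle : enorm2 (A *ᵥ z) ≤ opNorm A * enorm2 z :=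
    (div_le_iff₀ (hpos z hz)).mp (le_csSup hbdd ⟨z, hz, rfl⟩)
  rw [← enorm2_sq, ← enorm2_sq, ← mul_pow]
  exact pow_le_pow_left₀ (Real.sqrt_nonneg _) hle 2

lemma softThreshold_prox {α : ℝ} (hα : 0 ≤ α) (u z : ℝ) :
    let s := if α < |u| then Real.sign u * (|u| - α) else 0
    (s - u) ^ 2 + 2 * α * |s| + (z - s) ^ 2 ≤ (z - u) ^ 2 + 2 * α * |z| := by
  intro s
  by_cases h : α < |u|
  · have hs : s = Real.sign u * (|u| - α) := if_pos h
    rcases lt_trichotomy u 0 with hu | rfl | hu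
    · rw [hs, Real.sign_of_neg hu, abs_of_neg hu] at *
      rw [abs_of_neg (by linarith : -1 * (-u - α) < 0)]
      nlinarith [neg_abs_le z]
    · rw [abs_zero] at h
      linarith
    · rw [hs, Real.sign_of_pos hu, abs_of_pos hu] at *
      rw [abs_of_pos (by linarith : 0 < 1 * (u - α))]
      nlinarith [le_abs_self z]
  · have hs : s = 0 := if_neg h
    rw [hs, abs_zero]
    nlinarith [le_abs_self (z * u), abs_mul z u, abs_nonneg z,
      mul_le_mul_of_nonneg_left (not_lt.mp h) (abs_nonneg z)]

lemma eta_prox {k : ℕ} {α : ℝ} (hα : 0 ≤ α) (u z : Fin k → ℝ) :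
    (eta α u - u) ⬝ᵥ (eta α u - u) + 2 * α * onenorm (eta α u)
        + (z - eta α u) ⬝ᵥ (z - eta α u)
      ≤ (z - u) ⬝ᵥ (z - u) + 2 * α * onenorm z := by
  simp only [dotProduct, onenorm, Finset.mul_sum, ← Finset.sum_add_distrib]
  refine Finset.sum_le_sum fun i _ => ?_
  simpa only [eta, Pi.sub_apply, ← sq] using softThreshold_prox hα (u i) (z i)

lemma sum_mul_sub_dotProduct_sub_self {k : ℕ} {ι : Type*} [Fintype ι] (p : ι → ℝ)
    (hp : ∑ w, p w = 1) (Z : ι → Fin k → ℝ) (c : Fin k → ℝ) :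
    ∑ w, p w * ((Z w - c) ⬝ᵥ (Z w - c))
      = ∑ w, p w * ((Z w - ∑ w', p w' • Z w') ⬝ᵥ (Z w - ∑ w', p w' • Z w'))
        + (∑ w', p w' • Z w' - c) ⬝ᵥ (∑ w', p w' • Z w' - c) := by
  have expand : ∀ c' : Fin k → ℝ, ∑ w, p w * ((Z w - c') ⬝ᵥ (Z w - c'))
      = ∑ w, p w * (Z w ⬝ᵥ Z w) - 2 * ((∑ w, p w • Z w) ⬝ᵥ c') + c' ⬝ᵥ c' := by
    intro c'
    simp only [sub_dotProduct_sub_self, mul_add, mul_sub, Finset.sum_add_distrib,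
      Finset.sum_sub_distrib, ← Finset.sum_mul, hp, sum_dotProduct, smul_dotProduct,
      smul_eq_mul, Finset.mul_sum]
    ring_nf
  rw [expand, expand, sub_dotProduct_sub_self]
  ring

lemma avg_eq_sum_smul {n : ℕ} {V : Type*} [Fintype V] (P : V → V → ℝ) (X : V → Fin n → ℝ)
    (v : V) : avg P X v = ∑ w, P v w • X w := by
  ext i
  simp [avg, Finset.sum_apply]

lemma sum_sum_avg_sub_dotProduct_le {n : ℕ} {V : Type*} [Fintype V] {P : V → V → ℝ}
    (hsymm : ∀ v w, P v w = P w v) (hrow : ∀ v, ∑ w, P v w = 1) (Z C : V → Fin n → ℝ) :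
    ∑ v, ∑ w, P v w * ((avg P Z w - Z v) ⬝ᵥ (avg P Z w - Z v))
      ≤ ∑ v, ∑ w, P v w * ((Z v - C w) ⬝ᵥ (Z v - C w)) := by
  rw [Finset.sum_comm, Finset.sum_comm (f := fun v w => P v w * _)]
  refine Finset.sum_le_sum fun w _ => ?_
  simp only [hsymm _ w]
  rw [Finset.sum_congr rfl fun v _ => by rw [sub_dotProduct_sub_self_comm], avg_eq_sum_smul,
    sum_mul_sub_dotProduct_sub_self _ (hrow w) Z (C w)]
  exact le_add_of_nonneg_right (dotProduct_self_nonneg _)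

noncomputable def columnSurrogate {n m : ℕ} {V : Type*} [Fintype V]
    (A : Matrix (Fin m) (Fin n) ℝ) (y : Fin m → ℝ) (q α τ : ℝ) (p : V → ℝ)
    (C : V → Fin n → ℝ) (b z : Fin n → ℝ) : ℝ :=
  q * ((A *ᵥ z - y) ⬝ᵥ (A *ᵥ z - y)) + 2 * α / τ * onenorm z
    + (1 - q) / τ * ∑ w, p w * ((z - C w) ⬝ᵥ (z - C w))
    + q / τ * ((z - b) ⬝ᵥ (z - b)) - q * (A *ᵥ (z - b) ⬝ᵥ A *ᵥ (z - b))

section ColumnSurrogate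

variable {n m : ℕ} {V : Type*} [Fintype V] (A : Matrix (Fin m) (Fin n) ℝ) (y : Fin m → ℝ)
  (q α τ : ℝ) (p : V → ℝ) (C : V → Fin n → ℝ) (b : Fin n → ℝ)

lemma columnSurrogate_sub_const (hτ : τ ≠ 0) (hp : ∑ w, p w = 1) (z z' : Fin n → ℝ) :
    let u := (1 - q) • ∑ w, p w • C w + q • (b + τ • Aᵀ *ᵥ (y - A *ᵥ b))
    τ * columnSurrogate A y q α τ p C b z - ((z - u) ⬝ᵥ (z - u) + 2 * α * onenorm z)
      = τ * columnSurrogate A y q α τ p C b z'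
        - ((z' - u) ⬝ᵥ (z' - u) + 2 * α * onenorm z') := by
  intro u
  -- The quadratic terms in `z` add up to `z ⬝ᵥ z`: `τ q ‖A z‖²` occurs with both signs.
  have hsum : ∀ x : Fin n → ℝ, ∑ w, p w * ((x - C w) ⬝ᵥ (x - C w))
      = ∑ w, p w * ((C w - ∑ w', p w' • C w') ⬝ᵥ (C w - ∑ w', p w' • C w'))
        + (∑ w', p w' • C w' - x) ⬝ᵥ (∑ w', p w' • C w' - x) := fun x => by
    simp only [sub_dotProduct_sub_self_comm x]
    exact sum_mul_sub_dotProduct_sub_self p hp C x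
  have hu : ∀ x : Fin n → ℝ, x ⬝ᵥ u = (1 - q) * (x ⬝ᵥ ∑ w, p w • C w) + q * (x ⬝ᵥ b)
      + q * τ * (A *ᵥ x ⬝ᵥ y) - q * τ * (A *ᵥ x ⬝ᵥ A *ᵥ b) := fun x => by
    simp only [u, dotProduct_add, dotProduct_smul, smul_eq_mul, dotProduct_mulVec,
      vecMul_transpose, dotProduct_sub]
    ring
  rw [columnSurrogate, columnSurrogate, hsum z, hsum z']
  simp only [sub_dotProduct_sub_self _ u, hu, sub_dotProduct_sub_self, mulVec_sub,
    dotProduct_comm (∑ w', p w' • C w'), dotProduct_comm y, dotProduct_comm b]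
  field_simp
  ring

lemma columnSurrogate_eta_add_le (hτ : 0 < τ) (hα : 0 ≤ α) (hp : ∑ w, p w = 1)
    (z : Fin n → ℝ) :
    let u := (1 - q) • ∑ w, p w • C w + q • (b + τ • Aᵀ *ᵥ (y - A *ᵥ b))
    columnSurrogate A y q α τ p C b (eta α u) + τ⁻¹ * ((z - eta α u) ⬝ᵥ (z - eta α u))
      ≤ columnSurrogate A y q α τ p C b z := by
  intro u
  have hconst := columnSurrogate_sub_const A y q α τ p C b hτ.ne' hp (eta α u) z
  have hprox := eta_prox hα u z
  rw [← mul_le_mul_iff_right₀ hτ, mul_add, ← mul_assoc, mul_inv_cancel₀ hτ.ne', one_mul]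
  linarith

lemma columnSurrogate_ge (hq0 : 0 ≤ q) (hτ : 0 < τ) (hA : τ * opNorm A ^ 2 ≤ 1)
    (z : Fin n → ℝ) :
    q * ((A *ᵥ z - y) ⬝ᵥ (A *ᵥ z - y)) + 2 * α / τ * onenorm z
        + (1 - q) / τ * ∑ w, p w * ((z - C w) ⬝ᵥ (z - C w))
      ≤ columnSurrogate A y q α τ p C b z := by
  have hgap : q * (A *ᵥ (z - b) ⬝ᵥ A *ᵥ (z - b)) ≤ q / τ * ((z - b) ⬝ᵥ (z - b)) := by
    rw [div_mul_eq_mul_div, le_div_iff₀ hτ]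
    calc q * (A *ᵥ (z - b) ⬝ᵥ A *ᵥ (z - b)) * τ
        ≤ q * (opNorm A ^ 2 * ((z - b) ⬝ᵥ (z - b))) * τ := by
          gcongr
          exact mulVec_dotProduct_self_le A (z - b)
      _ = q * ((z - b) ⬝ᵥ (z - b)) * (τ * opNorm A ^ 2) := by ring
      _ ≤ q * ((z - b) ⬝ᵥ (z - b)) :=
          mul_le_of_le_one_right (mul_nonneg hq0 (dotProduct_self_nonneg _)) hA
  rw [columnSurrogate]
  linarith

end ColumnSurrogate

lemma Gamma_apply {n m : ℕ} {V : Type*} [Fintype V] (P : V → V → ℝ)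
    (A : V → Matrix (Fin m) (Fin n) ℝ) (y : V → Fin m → ℝ) (q α : ℝ) (τ : V → ℝ)
    (X : V → Fin n → ℝ) (v : V) :
    Gamma P A y q α τ X v
      = eta α ((1 - q) • avg P (avg P X) v + q • (X v + τ v • (A v)ᵀ *ᵥ (y v - A v *ᵥ X v))) :=
  rfl

/-- The paper's `F^S(Z; C, B)` with the neighbourhood sums written through the weights `P`;
for `P = Pmat E d` it is `FS E d A y q α (fun _ => τ) Z C B`. -/
noncomputable def surrogate {n m : ℕ} {V : Type*} [Fintype V] (P : V → V → ℝ)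
    (A : V → Matrix (Fin m) (Fin n) ℝ) (y : V → Fin m → ℝ) (q α τ : ℝ)
    (Z C B : V → Fin n → ℝ) : ℝ :=
  ∑ v, columnSurrogate (A v) (y v) q α τ (P v) C (B v) (Z v)

section Surrogate

variable {n m : ℕ} {V : Type*} [Fintype V] (P : V → V → ℝ)
  (A : V → Matrix (Fin m) (Fin n) ℝ) (y : V → Fin m → ℝ) (q α τ : ℝ)

lemma flasso_eq_surrogate_self (X : V → Fin n → ℝ) :
    Flasso P A y q α (fun _ => τ) X = surrogate P A y q α τ X (avg P X) X := by
  refine Finset.sum_congr rfl fun v _ => ?_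
  simp only [columnSurrogate, enorm2_sq, sub_self, mulVec_zero, dotProduct_zero,
    sub_dotProduct_sub_self_comm (y v), sub_dotProduct_sub_self_comm (avg P X _)]
  ring

lemma flasso_le_surrogate (hsymm : ∀ v w, P v w = P w v) (hrow : ∀ v, ∑ w, P v w = 1)
    (hq0 : 0 ≤ q) (hq1 : q ≤ 1) (hτ : 0 < τ) (hA : ∀ v, τ * opNorm (A v) ^ 2 ≤ 1)
    (Z C B : V → Fin n → ℝ) :
    Flasso P A y q α (fun _ => τ) Z ≤ surrogate P A y q α τ Z C B := by
  have hcons := sum_sum_avg_sub_dotProduct_le hsymm hrow Z C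
  calc Flasso P A y q α (fun _ => τ) Z
      = ∑ v, (q * ((A v *ᵥ Z v - y v) ⬝ᵥ (A v *ᵥ Z v - y v)) + 2 * α / τ * onenorm (Z v))
        + (1 - q) / τ * ∑ v, ∑ w, P v w * ((avg P Z w - Z v) ⬝ᵥ (avg P Z w - Z v)) := by
        simp only [Flasso, enorm2_sq, Finset.mul_sum, ← Finset.sum_add_distrib,
          sub_dotProduct_sub_self_comm (y _)]
    _ ≤ ∑ v, (q * ((A v *ᵥ Z v - y v) ⬝ᵥ (A v *ᵥ Z v - y v)) + 2 * α / τ * onenorm (Z v))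
        + (1 - q) / τ * ∑ v, ∑ w, P v w * ((Z v - C w) ⬝ᵥ (Z v - C w)) := by
        have hcoef : 0 ≤ (1 - q) / τ := div_nonneg (sub_nonneg.mpr hq1) hτ.le
        gcongr
    _ ≤ surrogate P A y q α τ Z C B := by
        rw [Finset.mul_sum, ← Finset.sum_add_distrib]
        exact Finset.sum_le_sum fun v _ =>
          columnSurrogate_ge (A v) (y v) q α τ (P v) C (B v) hq0 hτ (hA v) (Z v)

lemma surrogate_Gamma_add_le (hrow : ∀ v, ∑ w, P v w = 1) (hτ : 0 < τ) (hα : 0 ≤ α)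
    (X : V → Fin n → ℝ) :
    surrogate P A y q α τ (Gamma P A y q α (fun _ => τ) X) (avg P X) X
        + τ⁻¹ * frobNorm (Gamma P A y q α (fun _ => τ) X - X) ^ 2
      ≤ surrogate P A y q α τ X (avg P X) X := by
  rw [frobNorm_sq, surrogate, surrogate, Finset.mul_sum, ← Finset.sum_add_distrib]
  refine Finset.sum_le_sum fun v _ => ?_
  rw [Pi.sub_apply, sub_dotProduct_sub_self_comm, Gamma_apply, avg_eq_sum_smul]
  exact columnSurrogate_eta_add_le (A v) (y v) q α τ (P v) (avg P X) (X v) hτ hα (hrow v) (X v)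

lemma flasso_Gamma_add_le (hsymm : ∀ v w, P v w = P w v) (hrow : ∀ v, ∑ w, P v w = 1)
    (hq0 : 0 ≤ q) (hq1 : q ≤ 1) (hα : 0 ≤ α) (hτ : 0 < τ)
    (hA : ∀ v, τ * opNorm (A v) ^ 2 ≤ 1) (X : V → Fin n → ℝ) :
    Flasso P A y q α (fun _ => τ) (Gamma P A y q α (fun _ => τ) X)
        + τ⁻¹ * frobNorm (Gamma P A y q α (fun _ => τ) X - X) ^ 2
      ≤ Flasso P A y q α (fun _ => τ) X := by
  set Γ := Gamma P A y q α (fun _ => τ)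
  calc Flasso P A y q α (fun _ => τ) (Γ X) + τ⁻¹ * frobNorm (Γ X - X) ^ 2
      ≤ surrogate P A y q α τ (Γ X) (avg P X) X + τ⁻¹ * frobNorm (Γ X - X) ^ 2 := by
        gcongr
        exact flasso_le_surrogate P A y q α τ hsymm hrow hq0 hq1 hτ hA _ _ _
    _ ≤ surrogate P A y q α τ X (avg P X) X := surrogate_Gamma_add_le P A y q α τ hrow hτ hα X
    _ = Flasso P A y q α (fun _ => τ) X := (flasso_eq_surrogate_self P A y q α τ X).symm

end Surrogate

lemma frobNorm_le_sum_onenorm {n : ℕ} {V : Type*} [Fintype V] (X : V → Fin n → ℝ) :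
    frobNorm X ≤ ∑ v, onenorm (X v) := by
  have hsq : ∑ v, ∑ i, X v i ^ 2 ≤ (∑ v, onenorm (X v)) ^ 2 := by
    simp only [onenorm, ← sq_abs (X _ _), ← Fintype.sum_prod_type']
    exact Finset.sum_sq_le_sq_sum_of_nonneg fun _ _ => abs_nonneg _
  exact Real.sqrt_le_iff.mpr
    ⟨Finset.sum_nonneg fun v _ => Finset.sum_nonneg fun i _ => abs_nonneg _, hsq⟩

lemma mul_frobNorm_le_flasso {n m : ℕ} {V : Type*} [Fintype V] {P : V → V → ℝ}
    (hP : ∀ v w, 0 ≤ P v w) (A : V → Matrix (Fin m) (Fin n) ℝ) (y : V → Fin m → ℝ)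
    {q α τ : ℝ} (hq0 : 0 ≤ q) (hq1 : q ≤ 1) (hα : 0 ≤ α) (hτ : 0 < τ) (X : V → Fin n → ℝ) :
    2 * α / τ * frobNorm X ≤ Flasso P A y q α (fun _ => τ) X := by
  calc 2 * α / τ * frobNorm X ≤ ∑ v, 2 * α / τ * onenorm (X v) := by
        rw [← Finset.mul_sum]
        gcongr
        exact frobNorm_le_sum_onenorm X
    _ ≤ Flasso P A y q α (fun _ => τ) X := by
        refine Finset.sum_le_sum fun v _ => ?_
        have hfit : 0 ≤ q * enorm2 (y v - A v *ᵥ X v) ^ 2 := by positivity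
        have hcons : 0 ≤ (1 - q) / τ * ∑ w, P v w * enorm2 (avg P X w - X v) ^ 2 :=
          mul_nonneg (div_nonneg (sub_nonneg.mpr hq1) hτ.le)
            (Finset.sum_nonneg fun w _ => mul_nonneg (hP v w) (sq_nonneg _))
        linarith

lemma tendsto_zero_of_add_mul_le {f s : ℕ → ℝ} {c : ℝ} (hc : 0 < c) (hs : ∀ t, 0 ≤ s t)
    (hf : ∀ t, f (t + 1) + c * s t ≤ f t) (hbdd : BddBelow (Set.range f)) :
    Tendsto s atTop (nhds 0) := by
  have hanti : Antitone f := antitone_nat_of_succ_le fun t =>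
    le_of_add_le_of_nonneg_left (hf t) (mul_nonneg hc.le (hs t))
  have hlim := tendsto_atTop_ciInf hanti hbdd
  have hdiff : Tendsto (fun t => (f t - f (t + 1)) / c) atTop (nhds 0) := by
    simpa using ((hlim.sub (hlim.comp (tendsto_add_atTop_nat 1))).div_const c)
  refine squeeze_zero hs (fun t => ?_) hdiff
  rw [le_div_iff₀ hc]
  linarith [hf t]

section UniformWeights

variable {V : Type*} (E : V → V → Prop) [DecidableRel E] (d : ℕ)

lemma pmat_nonneg (v w : V) : 0 ≤ Pmat E d v w := by
  unfold Pmat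
  split_ifs <;> positivity

lemma pmat_comm (hsymm : ∀ u v, E u v → E v u) (v w : V) : Pmat E d v w = Pmat E d w v := by
  simp only [Pmat, propext ⟨hsymm v w, hsymm w v⟩]

lemma sum_pmat [Fintype V] (hreg : ∀ v, (Finset.univ.filter (fun w => E v w)).card = d) (hd : d ≠ 0)
    (v : V) : ∑ w, Pmat E d v w = 1 := by
  have hd' : (d : ℝ) ≠ 0 := Nat.cast_ne_zero.mpr hd
  unfold Pmat
  rw [← Finset.sum_filter, Finset.sum_const, hreg v, nsmul_eq_mul, mul_one_div_cancel hd']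

end UniformWeights

theorem dista_asymptotically_regular_general
    {n m d : ℕ} {V : Type*} [Fintype V] [Nonempty V]
    (E : V → V → Prop) [DecidableRel E]
    (hself : ∀ v, E v v) (hsymm : ∀ u v, E u v → E v u)
    (hreg : ∀ v, (Finset.univ.filter (fun w => E v w)).card = d)
    (A : V → Matrix (Fin m) (Fin n) ℝ) (y : V → Fin m → ℝ)
    (q α : ℝ) (hq0 : 0 < q) (hq1 : q < 1) (hα : 0 < α)
    (τ : ℝ) (hτpos : 0 < τ)
    (hτ : ∀ v, τ < (opNorm (A v) ^ 2)⁻¹)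
    (X0 : V → Fin n → ℝ) :
    (∃ R : ℝ, ∀ t : ℕ, frobNorm ((Gamma (Pmat E d) A y q α (fun _ => τ))^[t] X0) ≤ R)
      ∧ Filter.Tendsto (fun t : ℕ =>
          frobNorm ((Gamma (Pmat E d) A y q α (fun _ => τ))^[t + 1] X0
            - (Gamma (Pmat E d) A y q α (fun _ => τ))^[t] X0) ^ 2)
          Filter.atTop (nhds 0) := by
  obtain ⟨v₀⟩ := ‹Nonempty V›
  have hd : d ≠ 0 := by
    rw [← hreg v₀]
    exact Finset.card_ne_zero.mpr ⟨v₀, by simpa using hself v₀⟩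
  have hA : ∀ v, τ * opNorm (A v) ^ 2 ≤ 1 := fun v => by
    rcases (sq_nonneg (opNorm (A v))).eq_or_lt with h | h
    · simp [← h]
    · rw [mul_comm]
      exact ((lt_inv_mul_iff₀ h).mp (by simpa using hτ v)).le
  set Γ := Gamma (Pmat E d) A y q α (fun _ => τ)
  set F := Flasso (Pmat E d) A y q α (fun _ => τ)
  have hdesc : ∀ t, F (Γ^[t + 1] X0) + τ⁻¹ * frobNorm (Γ^[t + 1] X0 - Γ^[t] X0) ^ 2
      ≤ F (Γ^[t] X0) := fun t => by
    rw [Function.iterate_succ_apply']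
    exact flasso_Gamma_add_le _ A y q α τ (pmat_comm E d hsymm) (sum_pmat E d hreg hd)
      hq0.le hq1.le hα.le hτpos hA _
  have hcoer : ∀ X, 2 * α / τ * frobNorm X ≤ F X :=
    mul_frobNorm_le_flasso (pmat_nonneg E d) A y hq0.le hq1.le hα.le hτpos
  have hanti : Antitone fun t => F (Γ^[t] X0) :=
    antitone_nat_of_succ_le fun t => le_of_add_le_of_nonneg_left (hdesc t) (by positivity)
  refine ⟨⟨F X0 / (2 * α / τ), fun t => ?_⟩, ?_⟩
  · rw [le_div_iff₀' (by positivity)]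
    simpa using (hcoer _).trans (hanti (Nat.zero_le t))
  · refine tendsto_zero_of_add_mul_le (f := fun t => F (Γ^[t] X0)) (inv_pos.mpr hτpos)
      (fun t => sq_nonneg _) hdesc ⟨0, Set.forall_mem_range.mpr fun t => ?_⟩
    exact (mul_nonneg (by positivity) (Real.sqrt_nonneg _)).trans (hcoer _)

/-- Proposition 7: asymptotic regularity. With uniform stepsizes
`τ < ‖A_v‖₂⁻²` for every `v`, the DISTA sequence `X(t+1) = ΓX(t)` is bounded and satisfies
`‖X(t+1) − X(t)‖_F² → 0`. -/
theorem dista_asymptotically_regular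
    {n m d : ℕ} {V : Type*} [Fintype V] [DecidableEq V] [Nonempty V]
    (E : V → V → Prop) [DecidableRel E]
    (hself : ∀ v, E v v) (hsymm : ∀ u v, E u v → E v u)
    (hreg : ∀ v, (Finset.univ.filter (fun w => E v w)).card = d)
    (A : V → Matrix (Fin m) (Fin n) ℝ) (y : V → Fin m → ℝ)
    (q α : ℝ) (hq0 : 0 < q) (hq1 : q < 1) (hα : 0 < α)
    (τ : ℝ) (hτpos : 0 < τ)
    (hτ : ∀ v, τ < (opNorm (A v) ^ 2)⁻¹)
    (X0 : V → Fin n → ℝ) :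
    (∃ R : ℝ, ∀ t : ℕ, frobNorm ((Gamma (Pmat E d) A y q α (fun _ => τ))^[t] X0) ≤ R)
      ∧ Filter.Tendsto (fun t : ℕ =>
          frobNorm ((Gamma (Pmat E d) A y q α (fun _ => τ))^[t + 1] X0
            - (Gamma (Pmat E d) A y q α (fun _ => τ))^[t] X0) ^ 2)
          Filter.atTop (nhds 0) :=
  dista_asymptotically_regular_general E hself hsymm hreg A y q α hq0 hq1 hα τ hτpos hτ X0
end
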